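/- arXiv:math/0312396 — 5 statements merged into one kernel-verified Lean document; each statement's English description precedes it below -/
import Mathlib

section
/- Let L be a unimodular integral lattice (a finitely generated free Z-module with a nondegenerate symmetric bilinear form of discriminant ±1) and let φ be an isometric involution of L. Then for every element y of the rational span of the fixed sublattice L^φ = {x ∈ L : φ(x) = x} such that (y, x) ∈ Z for all x ∈ L^φ, one has 2y ∈ L^φ. In other words, the discriminant group (L^φ)*/L^φ is 2-elementary. -/
/-- For a unimodular integral lattice `L` (realized as a full-rank
self-dual lattice inside a rational quadratic space) with an isometric involution
`φ`, every element `y` of the rational span of the fixed sublattice `L^φ` pairing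
integrally with `L^φ` satisfies `2y ∈ L^φ`; i.e. `(L^φ)*/L^φ` is 2-elementary. -/
theorem stmt_0 (V : Type*) [AddCommGroup V] [Module ℚ V] [FiniteDimensional ℚ V]
    (B : V →ₗ[ℚ] V →ₗ[ℚ] ℚ) (hsymm : ∀ x y, B x y = B y x)
    (hnd : ∀ y : V, (∀ x : V, B y x = 0) → y = 0)
    (L : Submodule ℤ V)
    (hspan : Submodule.span ℚ (L : Set V) = ⊤)
    (hint : ∀ x ∈ L, ∀ y ∈ L, ∃ n : ℤ, B x y = n)
    (hunimod : ∀ y : V, (∀ x ∈ L, ∃ n : ℤ, B y x = n) → y ∈ L)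
    (φ : V →ₗ[ℚ] V) (hφ2 : φ ∘ₗ φ = LinearMap.id)
    (hφB : ∀ x y, B (φ x) (φ y) = B x y)
    (hφL : ∀ x ∈ L, φ x ∈ L)
    (y : V) (hy : y ∈ Submodule.span ℚ {x : V | x ∈ L ∧ φ x = x})
    (hyint : ∀ x ∈ L, φ x = x → ∃ n : ℤ, B y x = n) :
    (2 : ℚ) • y ∈ L ∧ φ ((2 : ℚ) • y) = (2 : ℚ) • y := by
  have hφφ : ∀ v : V, φ (φ v) = v := fun v => congrFun (congrArg DFunLike.coe hφ2) v
  -- φ fixes y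
  have hφy : φ y = y := by
    clear hyint
    induction hy using Submodule.span_induction with
    | mem x hx => exact hx.2
    | zero => simp
    | add a b _ _ ha hb => simp [ha, hb]
    | smul c a _ ha => simp [ha]
  refine ⟨?_, by rw [map_smul, hφy]⟩
  apply hunimod
  intro x hx
  -- x + φ x is in L and fixed
  have hfix : φ (x + φ x) = x + φ x := by
    rw [map_add, hφφ]; exact add_comm _ _
  obtain ⟨n, hn⟩ := hyint (x + φ x) (L.add_mem hx (hφL x hx)) hfix
  refine ⟨n, ?_⟩
  have key : B y (φ x) = B y x := by
    calc B y (φ x) = B (φ y) (φ (φ x)) := (hφB y (φ x)).symm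
    _ = B y x := by rw [hφy, hφφ]
  have : B y x + B y x = (n : ℚ) := by
    rw [← key]; simpa [key] using hn
  simp only [map_smul, LinearMap.smul_apply, smul_eq_mul]
  linarith
end

section
/- Let L be an integral lattice with commuting isometric involutions τ and φ. Suppose u, v ∈ L satisfy τ(u) = u, φ(u) = −u, τ(v) = v, φ(v) = −v. Suppose u₁, v₁ ∈ L satisfy τ(u₁) = −u₁, φ(u₁) = u₁, τ(v₁) = −v₁, φ(v₁) = −v₁, and that (u + u₁)/2 ∈ L and (v + v₁)/2 ∈ L (i.e. u + u₁ ∈ 2L and v + v₁ ∈ 2L). Then (u, v) ≡ 0 (mod 4). -/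
/-- In an integral lattice with commuting isometric involutions `τ`, `φ`,
if `u, v` are `τ`-fixed `φ`-anti-fixed, `u₁` is `τ`-anti-fixed `φ`-fixed, `v₁` is
anti-fixed by both, and `u + u₁ ∈ 2L`, `v + v₁ ∈ 2L`, then `(u,v) ≡ 0 (mod 4)`. -/
theorem stmt_2 (L : Type*) [AddCommGroup L] [Module ℤ L]
    [Module.Free ℤ L] [Module.Finite ℤ L]
    (B : L →ₗ[ℤ] L →ₗ[ℤ] ℤ) (hsymm : ∀ x y, B x y = B y x)
    (τ φ : L →ₗ[ℤ] L)
    (hτ2 : τ ∘ₗ τ = LinearMap.id) (hφ2 : φ ∘ₗ φ = LinearMap.id)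
    (hcomm : τ ∘ₗ φ = φ ∘ₗ τ)
    (hτB : ∀ x y, B (τ x) (τ y) = B x y) (hφB : ∀ x y, B (φ x) (φ y) = B x y)
    (u v u₁ v₁ : L)
    (huτ : τ u = u) (huφ : φ u = -u)
    (hvτ : τ v = v) (hvφ : φ v = -v)
    (hu₁τ : τ u₁ = -u₁) (hu₁φ : φ u₁ = u₁)
    (hv₁τ : τ v₁ = -v₁) (hv₁φ : φ v₁ = -v₁)
    (hu2 : ∃ w : L, u + u₁ = (2 : ℤ) • w)
    (hv2 : ∃ w : L, v + v₁ = (2 : ℤ) • w) :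
    (4 : ℤ) ∣ B u v := by
  obtain ⟨w, hw⟩ := hu2
  obtain ⟨w', hw'⟩ := hv2
  have h1 : B u₁ v = 0 := by
    have h := hτB u₁ v
    rw [hu₁τ, hvτ, map_neg, LinearMap.neg_apply] at h
    linarith
  have h2 : B u v₁ = 0 := by
    have h := hτB u v₁
    rw [huτ, hv₁τ, map_neg] at h
    linarith
  have h3 : B u₁ v₁ = 0 := by
    have h := hφB u₁ v₁
    rw [hu₁φ, hv₁φ, map_neg] at h
    linarith
  have key : B (u + u₁) (v + v₁) = 4 * B w w' := by
    rw [hw, hw']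
    simp [map_smul]
    ring
  simp only [map_add, LinearMap.add_apply, h1, h2, h3, add_zero, zero_add] at key
  exact ⟨B w w', by linarith⟩
end

section
/- Let L be a unimodular integral lattice with an isometric involution φ, and let x ∈ L with φ(x) = x. Then (x, w) ≡ 0 (mod 2) for all w ∈ L^φ if and only if there exists x' ∈ L with φ(x') = −x' such that x + x' ∈ 2L. -/
/-- In a unimodular integral lattice `L` with isometric involution `φ`,
for `x ∈ L^φ`: `(x,w) ≡ 0 (mod 2)` for all `w ∈ L^φ` iff there is `x' ∈ L_φ`
with `x + x' ∈ 2L`. -/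
theorem stmt_3 (L : Type*) [AddCommGroup L] [Module ℤ L]
    [Module.Free ℤ L] [Module.Finite ℤ L]
    (B : L →ₗ[ℤ] L →ₗ[ℤ] ℤ) (hsymm : ∀ x y, B x y = B y x)
    (hunimod : Function.Bijective B)
    (φ : L →ₗ[ℤ] L) (hφ2 : φ ∘ₗ φ = LinearMap.id)
    (hφB : ∀ x y, B (φ x) (φ y) = B x y)
    (x : L) (hx : φ x = x) :
    (∀ w : L, φ w = w → (2 : ℤ) ∣ B x w) ↔
      ∃ x' : L, φ x' = -x' ∧ ∃ y : L, x + x' = (2 : ℤ) • y := by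
  rename_i iAG iM iF iFin
  haveI : Subsingleton (Module ℤ L) := (AddCommGroup.uniqueIntModule).instSubsingleton
  obtain rfl : iM = AddCommGroup.toIntModule L := Subsingleton.elim _ _
  have hφφ : ∀ v, φ (φ v) = v := fun v => by
    simpa using LinearMap.congr_fun hφ2 v
  have hBφ : ∀ v w, B v (φ w) = B (φ v) w := fun v w => by
    conv_rhs => rw [← hφφ w]
    rw [hφB]
  constructor
  · intro h
    set M : Submodule ℤ L := LinearMap.ker (φ - LinearMap.id) with hMdef
    have memM : ∀ v : L, v ∈ M ↔ φ v = v := fun v => by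
      simp [hMdef, LinearMap.mem_ker, sub_eq_zero]
    have hself : ∀ v, v + φ v ∈ M := fun v => (memM _).mpr (by
      rw [map_add, hφφ, add_comm])
    have hdvd : ∀ m : M, (2 : ℤ) ∣ B x (m : L) := fun m => h m ((memM _).mp m.2)
    let ψ : M →ₗ[ℤ] ℤ :=
      { toFun := fun m => B x (m : L) / 2
        map_add' := by
          intro a b
          obtain ⟨p, hp⟩ := hdvd a
          obtain ⟨q, hq⟩ := hdvd b
          have hab : B x ((a + b : M) : L) = B x (a : L) + B x (b : L) := by
            rw [Submodule.coe_add, map_add]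
          rw [hab, hp, hq]; omega
        map_smul' := by
          intro c a
          obtain ⟨p, hp⟩ := hdvd a
          have hca : B x ((c • a : M) : L) = c * B x (a : L) := by
            rw [Submodule.coe_smul, map_smul, smul_eq_mul]
          rw [hca, hp, show c * (2 * p) = 2 * (c * p) by ring,
            Int.mul_ediv_cancel_left _ two_ne_zero,
            Int.mul_ediv_cancel_left _ two_ne_zero]
          simp }
    haveI : NoZeroSMulDivisors ℤ (L ⧸ M) := by
      refine ⟨fun {c v} hcv => ?_⟩
      obtain ⟨v, rfl⟩ := Submodule.Quotient.mk_surjective M v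
      rw [← Submodule.Quotient.mk_smul, Submodule.Quotient.mk_eq_zero] at hcv
      rw [memM, map_smul] at hcv
      by_cases hc : c = 0
      · exact Or.inl hc
      · right
        rw [Submodule.Quotient.mk_eq_zero, memM]
        have h0 : c • (φ v - v) = 0 := by rw [smul_sub, hcv, sub_self]
        rcases smul_eq_zero.mp h0 with h1 | h1
        · exact absurd h1 hc
        · exact sub_eq_zero.mp h1
    obtain ⟨s, hs⟩ := Module.projective_lifting_property M.mkQ LinearMap.id
      (Submodule.mkQ_surjective M)
    let f0 : L →ₗ[ℤ] L := LinearMap.id - s.comp M.mkQ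
    have hf0 : ∀ v, f0 v ∈ M := fun v => by
      show (LinearMap.id - s.comp M.mkQ : L →ₗ[ℤ] L) v ∈ M
      rw [← Submodule.Quotient.mk_eq_zero, ← Submodule.mkQ_apply]
      simp only [LinearMap.sub_apply, LinearMap.id_apply, LinearMap.comp_apply, map_sub]
      rw [← LinearMap.comp_apply M.mkQ s, hs]
      simp
    let r : L →ₗ[ℤ] M := LinearMap.codRestrict M f0 hf0
    have hr : ∀ v ∈ M, ((r v : M) : L) = v := fun v hv => by
      have h0 : M.mkQ v = 0 := by
        rw [Submodule.mkQ_apply, Submodule.Quotient.mk_eq_zero]; exact hv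
      show (LinearMap.id - s.comp M.mkQ : L →ₗ[ℤ] L) v = v
      simp only [LinearMap.sub_apply, LinearMap.id_apply, LinearMap.comp_apply, h0,
        map_zero, sub_zero]
    let g : L →ₗ[ℤ] ℤ := ψ.comp r
    have hgw : ∀ v ∈ M, g v = B x v / 2 := fun v hv => by
      show ψ (r v) = B x v / 2
      show B x ((r v : M) : L) / 2 = B x v / 2
      rw [hr v hv]
    obtain ⟨u, hu⟩ := hunimod.2 g
    have hxeq : x = u + φ u := by
      apply hunimod.1
      ext w
      have h1 : B (u + φ u) w = g (w + φ w) := by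
        rw [map_add B, LinearMap.add_apply, ← hBφ u w, hu, ← map_add]
      rw [h1]
      have h2 : g (w + φ w) = B x (w + φ w) / 2 := hgw _ (hself w)
      have h3 : B x (φ w) = B x w := by rw [hBφ, hx]
      rw [h2, map_add, h3]
      omega
    refine ⟨u - φ u, ?_, u, ?_⟩
    · rw [map_sub, hφφ, neg_sub]
    · rw [hxeq, two_smul]; abel
  · rintro ⟨x', hx', y, hxy⟩ w hw
    have h0 : B x' w = 0 := by
      have h1 := hφB x' w
      rw [hx', hw, map_neg, LinearMap.neg_apply] at h1
      linarith
    have hb : B x w + B x' w = 2 * B y w := by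
      rw [← LinearMap.add_apply, ← map_add, hxy, map_smul, LinearMap.smul_apply,
        smul_eq_mul]
    exact ⟨B y w, by omega⟩
end

section
/- Let L be an integral lattice with commuting isometric involutions τ and φ, and let h ∈ L with (h,h) = 2, τ(h) = h, and φ(h) = −h. Then it is impossible that both of the following hold simultaneously: (i) there exists u₁ ∈ L with φ(u₁) = u₁, τ(u₁) = −u₁, and h + u₁ ∈ 2L; and (ii) there exists v₁ ∈ L with φ(v₁) = −v₁, τ(v₁) = −v₁, and h + v₁ ∈ 2L. -/
/-- In an integral lattice with commuting isometric involutions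
`τ, φ` and `h` with `(h,h) = 2`, `τ h = h`, `φ h = −h`, it cannot happen that `h`
lifts to `L` over both `φ` (via some `u₁` with `φ u₁ = u₁`, `τ u₁ = −u₁`,
`h + u₁ ∈ 2L`) and over `τφ` (via some `v₁` with `φ v₁ = −v₁`, `τ v₁ = −v₁`,
`h + v₁ ∈ 2L`). -/
theorem stmt_17 (L : Type*) [AddCommGroup L] [Module ℤ L]
    [Module.Free ℤ L] [Module.Finite ℤ L]
    (B : L →ₗ[ℤ] L →ₗ[ℤ] ℤ) (hsymm : ∀ x y, B x y = B y x)
    (τ φ : L →ₗ[ℤ] L)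
    (hτ2 : τ ∘ₗ τ = LinearMap.id) (hφ2 : φ ∘ₗ φ = LinearMap.id)
    (hcomm : τ ∘ₗ φ = φ ∘ₗ τ)
    (hτB : ∀ x y, B (τ x) (τ y) = B x y) (hφB : ∀ x y, B (φ x) (φ y) = B x y)
    (h : L) (hh2 : B h h = 2) (hτh : τ h = h) (hφh : φ h = -h) :
    ¬ ((∃ u₁ : L, φ u₁ = u₁ ∧ τ u₁ = -u₁ ∧ ∃ w : L, h + u₁ = (2 : ℤ) • w) ∧
       (∃ v₁ : L, φ v₁ = -v₁ ∧ τ v₁ = -v₁ ∧ ∃ w : L, h + v₁ = (2 : ℤ) • w)) := by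
  rintro ⟨⟨u, hφu, hτu, w, hw⟩, ⟨v, hφv, hτv, w', hw'⟩⟩
  -- cross terms vanish
  have hu : B h u = 0 := by
    have := hφB h u
    rw [hφh, hφu, map_neg, LinearMap.neg_apply] at this
    omega
  have hv : B h v = 0 := by
    have := hτB h v
    rw [hτh, hτv, map_neg] at this
    omega
  have huv : B u v = 0 := by
    have := hφB u v
    rw [hφu, hφv, map_neg] at this
    omega
  have key : B (h + u) (h + v) = 2 := by
    simp [map_add, LinearMap.add_apply, hh2, hu, hv, huv, hsymm u h ▸ hu]
  rw [hw, hw'] at key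
  simp only [two_zsmul, map_add, LinearMap.add_apply] at key
  omega
end

section
/- Let L be an even unimodular lattice and τ, φ commuting isometric involutions of L. Set S = L^τ, S₊ = {x ∈ S : φ(x) = x}, S₋ = {x ∈ S : φ(x) = −x}, and L_τ = {x ∈ L : τ(x) = −x}. Assume S₊ is negative definite, even, and contains no vector of square −2, and that S₋ is hyperbolic (it contains a vector of positive square and is nondegenerate of signature (1, rank S₋ − 1)). Suppose δ ∈ L satisfies (δ,δ) = −2 and δ = (δ₁ + δ₂)/2 with δ₁ ∈ S, δ₂ ∈ L_τ, (δ₁,δ₁) = (δ₂,δ₂) = −4. If moreover either φ(δ₂) = δ₂ or φ(δ₂) = −δ₂, and there exists h ∈ S₋ with (h,h) > 0 and (δ₁, h) = 0, then δ₁ ∈ S₊ ∪ S₋. -/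
private theorem helper18 {L : Type*} [AddCommGroup L] [Module ℤ L] [Module.Free ℤ L]
    (x y : L) (h : x + x = y + y) : x = y := by
  classical
  let b := Module.Free.chooseBasis ℤ L
  apply b.repr.injective
  ext i
  have := congrArg (fun z => b.repr z i) h
  simp only [map_add, Finsupp.add_apply] at this
  omega

set_option maxHeartbeats 1000000

/-- Key Lemma: Let `L` be an even unimodular lattice with commuting
isometric involutions `τ, φ`; `S = L^τ`, `S₊ = S ∩ L^φ`, `S₋ = S ∩ L_φ`. Assume
`S₊` is negative definite, even, with no `(−2)`-vectors, and `S₋` is hyperbolic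
(witnessed by a positive vector `h₀` whose orthogonal complement in `S₋` is
negative definite). If `δ ∈ L`, `δ² = −2`, `δ = (δ₁ + δ₂)/2` with `δ₁ ∈ S`,
`δ₂ ∈ L_τ`, `δ₁² = δ₂² = −4`, `φ δ₂ = ±δ₂`, and `δ₁` is orthogonal to some
`h ∈ S₋` of positive square, then `δ₁ ∈ S₊ ∪ S₋`. -/
theorem stmt_18 (L : Type*) [AddCommGroup L] [Module ℤ L]
    [Module.Free ℤ L] [Module.Finite ℤ L]
    (B : L →ₗ[ℤ] L →ₗ[ℤ] ℤ) (hsymm : ∀ x y, B x y = B y x)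
    (heven : ∀ x : L, (2 : ℤ) ∣ B x x)
    (hunimod : Function.Bijective B)
    (τ φ : L →ₗ[ℤ] L)
    (hτ2 : τ ∘ₗ τ = LinearMap.id) (hφ2 : φ ∘ₗ φ = LinearMap.id)
    (hcomm : τ ∘ₗ φ = φ ∘ₗ τ)
    (hτB : ∀ x y, B (τ x) (τ y) = B x y) (hφB : ∀ x y, B (φ x) (φ y) = B x y)
    (hSplusnegdef : ∀ x : L, τ x = x → φ x = x → x ≠ 0 → B x x < 0)
    (hSpluseven : ∀ x : L, τ x = x → φ x = x → (2 : ℤ) ∣ B x x)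
    (hSplusno2 : ∀ x : L, τ x = x → φ x = x → B x x ≠ -2)
    (h₀ : L) (hh₀τ : τ h₀ = h₀) (hh₀φ : φ h₀ = -h₀) (hh₀pos : 0 < B h₀ h₀)
    (hhyp : ∀ x : L, τ x = x → φ x = -x → B x h₀ = 0 → x ≠ 0 → B x x < 0)
    (δ δ₁ δ₂ : L)
    (hδ2 : B δ δ = -2)
    (hδ₁S : τ δ₁ = δ₁) (hδ₂τ : τ δ₂ = -δ₂)
    (hδ₁sq : B δ₁ δ₁ = -4) (hδ₂sq : B δ₂ δ₂ = -4)
    (hhalf : δ₁ + δ₂ = (2 : ℤ) • δ)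
    (hδ₂φ : φ δ₂ = δ₂ ∨ φ δ₂ = -δ₂)
    (h : L) (hhτ : τ h = h) (hhφ : φ h = -h) (hhpos : 0 < B h h)
    (hperp : B δ₁ h = 0) :
    φ δ₁ = δ₁ ∨ φ δ₁ = -δ₁ := by
  classical
  have hφφ : ∀ x, φ (φ x) = x := fun x => by
    have := DFunLike.congr_fun hφ2 x; simpa using this
  have hτφ : ∀ x, τ (φ x) = φ (τ x) := fun x => by
    have := DFunLike.congr_fun hcomm x; simpa using this
  have hB2 : ∀ (n : ℤ) (x y : L), B x (n • y) = n * B x y := fun n x y => by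
    rw [map_zsmul, zsmul_eq_mul, Int.cast_id]
  have hB1 : ∀ (n : ℤ) (x y : L), B (n • x) y = n * B x y := fun n x y => by
    rw [hsymm, hB2, hsymm]
  have hhalf' : δ₁ + δ₂ = δ + δ := by rw [hhalf, two_zsmul]
  -- Construct p ∈ S₊ and e ∈ S₋ with p+p = δ₁+φδ₁ and e+e = δ₁-φδ₁
  obtain ⟨p, e, hpτ, hpφ, heτ, heφ, hp1, he1⟩ :
      ∃ p e : L, τ p = p ∧ φ p = p ∧ τ e = e ∧ φ e = -e ∧
        p + p = δ₁ + φ δ₁ ∧ e + e = δ₁ - φ δ₁ := by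
    rcases hδ₂φ with hc | hc
    · have hφd : φ δ₁ + δ₂ = φ δ + φ δ := by
        have := congrArg φ hhalf'
        simpa [map_add, hc] using this
      have hp1 : (δ + φ δ - δ₂) + (δ + φ δ - δ₂) = δ₁ + φ δ₁ := by
        have h1 : (δ + φ δ - δ₂) + (δ + φ δ - δ₂)
            = ((δ + δ) + (φ δ + φ δ)) - (δ₂ + δ₂) := by abel
        rw [h1, ← hhalf', ← hφd]; abel
      have he1 : (δ - φ δ) + (δ - φ δ) = δ₁ - φ δ₁ := by
        have h1 : (δ - φ δ) + (δ - φ δ) = (δ + δ) - (φ δ + φ δ) := by abel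
        rw [h1, ← hhalf', ← hφd]; abel
      refine ⟨δ + φ δ - δ₂, δ - φ δ, ?_, ?_, ?_, ?_, hp1, he1⟩
      · apply helper18
        calc τ (δ + φ δ - δ₂) + τ (δ + φ δ - δ₂)
            = τ ((δ + φ δ - δ₂) + (δ + φ δ - δ₂)) := (map_add τ _ _).symm
          _ = τ (δ₁ + φ δ₁) := by rw [hp1]
          _ = δ₁ + φ δ₁ := by rw [map_add, hδ₁S, hτφ, hδ₁S]
          _ = (δ + φ δ - δ₂) + (δ + φ δ - δ₂) := hp1.symm
      · simp only [map_sub, map_add, hφφ, hc]; abel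
      · apply helper18
        calc τ (δ - φ δ) + τ (δ - φ δ)
            = τ ((δ - φ δ) + (δ - φ δ)) := (map_add τ _ _).symm
          _ = τ (δ₁ - φ δ₁) := by rw [he1]
          _ = δ₁ - φ δ₁ := by rw [map_sub, hδ₁S, hτφ, hδ₁S]
          _ = (δ - φ δ) + (δ - φ δ) := he1.symm
      · simp only [map_sub, hφφ]; abel
    · have hφd : φ δ₁ - δ₂ = φ δ + φ δ := by
        have := congrArg φ hhalf'
        simpa [map_add, hc, sub_eq_add_neg] using this
      have hp1 : (δ + φ δ) + (δ + φ δ) = δ₁ + φ δ₁ := by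
        have h1 : (δ + φ δ) + (δ + φ δ) = (δ + δ) + (φ δ + φ δ) := by abel
        rw [h1, ← hhalf', ← hφd]; abel
      have he1 : (δ - φ δ - δ₂) + (δ - φ δ - δ₂) = δ₁ - φ δ₁ := by
        have h1 : (δ - φ δ - δ₂) + (δ - φ δ - δ₂)
            = (δ + δ) - (φ δ + φ δ) - (δ₂ + δ₂) := by abel
        rw [h1, ← hhalf', ← hφd]; abel
      refine ⟨δ + φ δ, δ - φ δ - δ₂, ?_, ?_, ?_, ?_, hp1, he1⟩
      · apply helper18
        calc τ (δ + φ δ) + τ (δ + φ δ)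
            = τ ((δ + φ δ) + (δ + φ δ)) := (map_add τ _ _).symm
          _ = τ (δ₁ + φ δ₁) := by rw [hp1]
          _ = δ₁ + φ δ₁ := by rw [map_add, hδ₁S, hτφ, hδ₁S]
          _ = (δ + φ δ) + (δ + φ δ) := hp1.symm
      · simp only [map_add, hφφ]; abel
      · apply helper18
        calc τ (δ - φ δ - δ₂) + τ (δ - φ δ - δ₂)
            = τ ((δ - φ δ - δ₂) + (δ - φ δ - δ₂)) := (map_add τ _ _).symm
          _ = τ (δ₁ - φ δ₁) := by rw [he1]
          _ = δ₁ - φ δ₁ := by rw [map_sub, hδ₁S, hτφ, hδ₁S]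
          _ = (δ - φ δ - δ₂) + (δ - φ δ - δ₂) := he1.symm
      · simp only [map_sub, map_add, hφφ, hc]; abel
  -- numeric facts
  have hBφδ₁ : B (φ δ₁) (φ δ₁) = -4 := by rw [hφB]; exact hδ₁sq
  have hsum : B p p + B e e = -4 := by
    have e1 : B (p + p) (p + p) = 4 * B p p := by
      simp only [map_add, LinearMap.add_apply]; ring
    have e2 : B (e + e) (e + e) = 4 * B e e := by
      simp only [map_add, LinearMap.add_apply]; ring
    have e3 : B (δ₁ + φ δ₁) (δ₁ + φ δ₁) = -8 + 2 * B δ₁ (φ δ₁) := by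
      simp only [map_add, LinearMap.add_apply, hδ₁sq, hBφδ₁, hsymm (φ δ₁) δ₁]; ring
    have e4 : B (δ₁ - φ δ₁) (δ₁ - φ δ₁) = -8 - 2 * B δ₁ (φ δ₁) := by
      simp only [map_sub, LinearMap.sub_apply, hδ₁sq, hBφδ₁, hsymm (φ δ₁) δ₁]; ring
    rw [hp1] at e1; rw [he1] at e2
    rw [e3] at e1; rw [e4] at e2
    linarith
  have hφδ₁h : B (φ δ₁) h = 0 := by
    have h1 : B (φ δ₁) (φ h) = B δ₁ h := hφB δ₁ h
    rw [hhφ, map_neg, hperp] at h1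
    linarith
  have hBeh : B e h = 0 := by
    have h1 : B (e + e) h = 2 * B e h := by
      simp only [map_add, LinearMap.add_apply]; ring
    rw [he1, map_sub, LinearMap.sub_apply, hperp, hφδ₁h] at h1
    linarith
  -- B h h₀ ≠ 0 (hyperbolicity)
  have hhh₀ : B h h₀ ≠ 0 := by
    intro h0
    set w : L := (B h₀ h₀) • h - (B h h₀) • h₀ with hw
    have hwτ : τ w = w := by
      simp only [hw, map_sub, map_zsmul, hhτ, hh₀τ]
    have hwφ : φ w = -w := by
      rw [hw, map_sub, map_zsmul, map_zsmul, hhφ, hh₀φ, zsmul_neg, zsmul_neg]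
      abel
    have hwh₀ : B w h₀ = 0 := by
      simp only [hw, map_sub, LinearMap.sub_apply, hB1]
      ring
    have hww : B w w = (B h₀ h₀) ^ 2 * B h h := by
      simp only [hw, map_sub, LinearMap.sub_apply, hB1, hB2,
        h0, hsymm h₀ h]
      ring
    have hwwpos : 0 < B w w := by
      rw [hww]; exact mul_pos (pow_pos hh₀pos 2) hhpos
    rcases eq_or_ne w 0 with h1 | h1
    · rw [h1] at hwwpos; simp at hwwpos
    · have := hhyp w hwτ hwφ hwh₀ h1
      linarith
  have hb2 : 0 < (B h h₀) ^ 2 := pow_two_pos_of_ne_zero hhh₀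
  -- Cauchy–Schwarz in the hyperbolic S₋ for e
  have hkey : B e e ≤ 0 ∧ (B e e = 0 → e = 0) := by
    set w : L := (B h h₀) • e - (B e h₀) • h with hw
    have hwτ : τ w = w := by
      simp only [hw, map_sub, map_zsmul, hhτ, heτ]
    have hwφ : φ w = -w := by
      rw [hw, map_sub, map_zsmul, map_zsmul, hhφ, heφ, zsmul_neg, zsmul_neg]
      abel
    have hwh₀ : B w h₀ = 0 := by
      simp only [hw, map_sub, LinearMap.sub_apply, hB1]
      ring
    have hww : B w w = (B h h₀) ^ 2 * B e e + (B e h₀) ^ 2 * B h h := by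
      simp only [hw, map_sub, LinearMap.sub_apply, hB1, hB2,
        hBeh, hsymm h e]
      ring
    have hwwle : B w w ≤ 0 := by
      rcases eq_or_ne w 0 with h1 | h1
      · rw [h1]; simp
      · exact le_of_lt (hhyp w hwτ hwφ hwh₀ h1)
    rw [hww] at hwwle
    constructor
    · by_contra hpos
      push_neg at hpos
      have h2 : 0 < (B h h₀) ^ 2 * B e e := mul_pos hb2 hpos
      nlinarith [sq_nonneg (B e h₀), hhpos]
    · intro h0
      rw [h0, mul_zero, zero_add] at hwwle
      have hc2 : (B e h₀) ^ 2 ≤ 0 := by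
        by_contra hcpos
        push_neg at hcpos
        have := mul_pos hcpos hhpos
        linarith
      have hc0 : B e h₀ = 0 :=
        pow_eq_zero_iff two_ne_zero |>.mp (le_antisymm hc2 (sq_nonneg _))
      by_contra hne
      have := hhyp e heτ heφ hc0 hne
      linarith [h0]
  -- conclude by case analysis on B p p
  rcases eq_or_ne (B p p) 0 with hp0 | hp0
  · right
    have hpz : p = 0 := by
      by_contra h1
      have := hSplusnegdef p hpτ hpφ h1
      exact absurd hp0 (ne_of_lt this)
    have hz : δ₁ + φ δ₁ = 0 := by rw [← hp1, hpz]; simp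
    rw [add_comm] at hz
    rwa [add_eq_zero_iff_eq_neg] at hz
  · left
    have hple : B p p ≤ 0 := by
      rcases eq_or_ne p 0 with h1 | h1
      · rw [h1]; simp
      · exact le_of_lt (hSplusnegdef p hpτ hpφ h1)
    have hno2 : B p p ≠ -2 := hSplusno2 p hpτ hpφ
    obtain ⟨k, hk⟩ := heven p
    have hple4 : B p p ≤ -4 := by
      rw [hk] at hple hno2 hp0 ⊢
      omega
    have hee0 : B e e = 0 := le_antisymm hkey.1 (by linarith)
    have hez : e = 0 := hkey.2 hee0
    have hz : δ₁ - φ δ₁ = 0 := by rw [← he1, hez]; simp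
    exact (sub_eq_zero.mp hz).symm
end
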